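/- arXiv:1511.02499 — 2 statements merged into one kernel-verified Lean document; each statement's English description precedes it below -/
import Mathlib

section
/- If G is a three-dimensional real Lie algebra with dim [G,G] = 1, then the centralizer of [G,G] in G has dimension at least 2. -/
/-- The centralizer of the derived algebra `[G,G]` inside `G`, as a submodule. -/
def centralizerDerived (G : Type*) [LieRing G] [LieAlgebra ℝ G] : Submodule ℝ G where
  carrier := {X | ∀ W ∈ LieAlgebra.derivedSeries ℝ G 1, ⁅X, W⁆ = 0}
  add_mem' := by intro a b ha hb W hW; rw [add_lie, ha W hW, hb W hW, add_zero]
  zero_mem' := by intro W hW; rw [zero_lie]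
  smul_mem' := by intro c a ha W hW; rw [smul_lie, ha W hW, smul_zero]

/-- If `G` is a three-dimensional real Lie algebra with `dim [G,G] = 1`, then the
centralizer of `[G,G]` in `G` has dimension at least 2. -/
theorem dim3_derived_dim1_centralizer_ge_two (G : Type*) [LieRing G] [LieAlgebra ℝ G]
    [Module.Finite ℝ G] (hdim : Module.finrank ℝ G = 3)
    (hder : Module.finrank ℝ (LieAlgebra.derivedSeries ℝ G 1) = 1) :
    2 ≤ Module.finrank ℝ (centralizerDerived G) := by
  set I := LieAlgebra.derivedSeries ℝ G 1 with hI
  obtain ⟨v, hv0, hv⟩ := (finrank_eq_one_iff' (K := ℝ)).1 hder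
  -- v : I
  set f : G →ₗ[ℝ] G := LieAlgebra.ad ℝ G (v : G) with hf
  have hker : LinearMap.ker f ≤ centralizerDerived G := by
    intro X hX W hW
    obtain ⟨c, hc⟩ := hv ⟨W, hW⟩
    have hc' : c • (v : G) = W := congrArg Subtype.val hc
    have hXv : ⁅(v : G), X⁆ = 0 := hX
    rw [← hc', lie_smul, ← lie_skew, hXv, neg_zero, smul_zero]
  have hrange : LinearMap.range f ≤ I.toSubmodule := by
    rintro _ ⟨X, rfl⟩
    exact lie_mem_left ℝ G I (v : G) X v.2
  have h1 : Module.finrank ℝ (LinearMap.range f) ≤ 1 := by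
    calc Module.finrank ℝ (LinearMap.range f) ≤ Module.finrank ℝ I.toSubmodule :=
          Submodule.finrank_mono hrange
      _ = 1 := hder
  have h2 := LinearMap.finrank_range_add_finrank_ker f
  have h3 : 2 ≤ Module.finrank ℝ (LinearMap.ker f) := by omega
  exact h3.trans (Submodule.finrank_mono hker)
end

section
/- If G is a three-dimensional real Lie algebra with G = [G,G], then for any nonzero element I of G, the centralizer of I in G is the one-dimensional span of I. -/
/-!
If `X` commutes with `I` but is not a multiple of it, extend `X, I` to a basis `X, I, K`.
Since `⁅X, I⁆ = 0`, every bracket of basis vectors is `0` or `±⁅X, K⁆` or `±⁅I, K⁆`, so the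
derived algebra has dimension at most `2` and cannot be all of `G`.
-/

open Module Submodule

theorem finrank_span_pair_le_two {R M : Type*} [Ring R] [StrongRankCondition R] [AddCommGroup M]
    [Module R M] (x y : M) : finrank R (span R {x, y}) ≤ 2 := by
  classical
  have := (finrank_span_finset_le_card (R := R) ({x, y} : Finset M)).trans Finset.card_le_two
  rwa [Finset.coe_pair] at this

theorem exists_span_insert_pair_eq_top {K V : Type*} [DivisionRing K] [AddCommGroup V]
    [Module K V] (hV : finrank K V = 3) {x y : V} (hxy : LinearIndependent K ![x, y]) :
    ∃ z, span K {x, y, z} = ⊤ := by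
  obtain ⟨z, hz⟩ := exists_linearIndependent_cons_of_lt_finrank hxy (by omega)
  refine ⟨z, ?_⟩
  have := hz.span_eq_top_of_card_eq_finrank (by simp [hV])
  rwa [← Matrix.vecCons, Matrix.range_cons, Matrix.range_cons_cons_empty, Set.singleton_union,
    Set.insert_comm, Set.pair_comm] at this

namespace LieAlgebra

section CommRing

variable {R L : Type*} [CommRing R] [LieRing L] [LieAlgebra R L]

theorem derivedSeries_one_eq_span_image2_lie {s : Set L} (hs : span R s = ⊤) :
    (derivedSeries R L 1).toSubmodule = span R (Set.image2 (⁅·, ·⁆) s s) := by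
  rw [derivedSeries_def, derivedSeriesOfIdeal_succ, derivedSeriesOfIdeal_zero,
    LieSubmodule.lieIdeal_oper_eq_linear_span']
  have := map₂_span_span R (LieModule.toEnd R L L : L →ₗ[R] Module.End R L) s s
  rw [hs, map₂_eq_span_image2] at this
  simpa [Set.image2] using this

theorem derivedSeries_one_le_span_lie_pair {x y z : L} (hspan : span R {x, y, z} = ⊤)
    (hxy : ⁅x, y⁆ = 0) :
    (derivedSeries R L 1).toSubmodule ≤ span R {⁅x, z⁆, ⁅y, z⁆} := by
  rw [derivedSeries_one_eq_span_image2_lie hspan, span_le]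
  have hyx : ⁅y, x⁆ = 0 := by rw [← lie_skew, hxy, neg_zero]
  have hzx : ⁅z, x⁆ = -⁅x, z⁆ := by rw [← lie_skew]
  have hzy : ⁅z, y⁆ = -⁅y, z⁆ := by rw [← lie_skew]
  rintro _ ⟨a, ha, b, hb, rfl⟩
  simp only [Set.mem_insert_iff, Set.mem_singleton_iff] at ha hb
  rcases ha with rfl | rfl | rfl <;> rcases hb with rfl | rfl | rfl <;>
    simp only [SetLike.mem_coe, lie_self, hxy, hyx, hzx, hzy, neg_mem_iff, zero_mem]
  all_goals exact subset_span (by simp)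

end CommRing

theorem not_linearIndependent_of_lie_eq_zero {K L : Type*} [Field K] [LieRing L]
    [LieAlgebra K L] (hdim : finrank K L = 3) (hperf : derivedSeries K L 1 = ⊤) {x y : L}
    (hxy : ⁅x, y⁆ = 0) : ¬LinearIndependent K ![x, y] := by
  intro hind
  have : Module.Finite K L := Module.finite_of_finrank_eq_succ hdim
  obtain ⟨z, hspan⟩ := exists_span_insert_pair_eq_top hdim hind
  have hle := finrank_mono (derivedSeries_one_le_span_lie_pair hspan hxy)
  rw [hperf, LieSubmodule.top_toSubmodule, finrank_top, hdim] at hle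
  have := finrank_span_pair_le_two (R := K) ⁅x, z⁆ ⁅y, z⁆
  omega

end LieAlgebra

theorem perfect_dim3_centralizer_span_general (G : Type*) [LieRing G] [LieAlgebra ℝ G]
    (hdim : Module.finrank ℝ G = 3)
    (hperf : LieAlgebra.derivedSeries ℝ G 1 = ⊤)
    (I : G) (hI : I ≠ 0) :
    ∀ X : G, ⁅X, I⁆ = 0 ↔ X ∈ Submodule.span ℝ ({I} : Set G) := by
  intro X
  refine ⟨fun hXI => ?_, fun hX => ?_⟩
  · by_contra hX
    refine LieAlgebra.not_linearIndependent_of_lie_eq_zero hdim hperf hXI ?_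
    rw [LinearIndependent.pair_symm_iff, LinearIndependent.pair_iff' hI]
    rintro a rfl
    exact hX (smul_mem _ a (mem_span_singleton_self I))
  · obtain ⟨c, rfl⟩ := mem_span_singleton.mp hX
    simp

/-- If `G` is a three-dimensional perfect real Lie algebra and `I ≠ 0`, then the centralizer
of `I` in `G` is exactly the span of `I`. -/
theorem perfect_dim3_centralizer_span (G : Type*) [LieRing G] [LieAlgebra ℝ G]
    [Module.Finite ℝ G] (hdim : Module.finrank ℝ G = 3)
    (hperf : LieAlgebra.derivedSeries ℝ G 1 = ⊤)
    (I : G) (hI : I ≠ 0) :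
    ∀ X : G, ⁅X, I⁆ = 0 ↔ X ∈ Submodule.span ℝ ({I} : Set G) :=
  perfect_dim3_centralizer_span_general G hdim hperf I hI
end
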